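/- arXiv:1507.04909 — 5 statements merged into one kernel-verified Lean document; each statement's English description precedes it below -/
import Mathlib

section
/- Let n be a positive integer and let E_1, E_2, …, E_n be independent real random variables such that E_i is exponentially distributed with rate i (density t ↦ i·e^{−i t} on [0,∞)). Then the sum E_1 + E_2 + ⋯ + E_n has the same distribution as the maximum of n i.i.d. rate-1 exponential random variables; equivalently, for every x ≥ 0, P(E_1 + ⋯ + E_n ≤ x) = (1 − e^{−x})^n. -/
open MeasureTheory ProbabilityTheory Real

/-- The law of an exponential random variable with rate `a`:
the measure on `ℝ` with density `t ↦ a * exp (-a * t)` on `[0, ∞)`. -/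
noncomputable def expLaw (a : ℝ) : Measure ℝ :=
  volume.withDensity (fun t => ENNReal.ofReal (if 0 ≤ t then a * Real.exp (-a * t) else 0))

/-!
Induction on `n`: if `E 1 + ⋯ + E k` has distribution function `F_k(x) = (1 - e^{-x})^k`, then
convolving with the rate-`(k+1)` density gives
`∫₀ˣ (k+1) e^{-(k+1)t} (1 - e^{-(x-t)})^k dt = ∫₀ˣ (k+1) e^{-t} (e^{-t} - e^{-x})^k dt`,
whose integrand is the derivative of `-(e^{-t} - e^{-x})^{k+1}`; hence it equals `F_{k+1}(x)`.
-/

/-- Extended by `0` on `(-∞, 0)`, so that `maxExpCDF 0` is the distribution function of the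
point mass at `0`, the law of the empty sum. -/
noncomputable def maxExpCDF (n : ℕ) (x : ℝ) : ℝ :=
  if 0 ≤ x then (1 - exp (-x)) ^ n else 0

lemma measurable_maxExpCDF (n : ℕ) : Measurable (maxExpCDF n) :=
  Measurable.ite measurableSet_Ici (by fun_prop) measurable_const

lemma MeasureTheory.Measure.conv_apply {M : Type*} [AddMonoid M] [MeasurableSpace M]
    [MeasurableAdd₂ M] {μ ν : Measure M} [SFinite ν] {s : Set M} (hs : MeasurableSet s) :
    (μ ∗ ν) s = ∫⁻ a, ν ((a + ·) ⁻¹' s) ∂μ := by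
  rw [Measure.conv, Measure.map_apply measurable_add hs, Measure.prod_apply (measurable_add hs)]
  rfl

lemma setIntegral_Icc_exp_mul_pow (k : ℕ) (x : ℝ) :
    ∫ t in Set.Icc 0 x, (k + 1) * exp (-t) * (exp (-t) - exp (-x)) ^ k
      = maxExpCDF (k + 1) x := by
  rcases lt_or_ge x 0 with hx | hx
  · simp [maxExpCDF, hx]
  have hderiv : ∀ t ∈ Set.uIcc 0 x,
      HasDerivAt (fun s => -(exp (-s) - exp (-x)) ^ (k + 1))
        ((k + 1) * exp (-t) * (exp (-t) - exp (-x)) ^ k) t := by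
    intro t _
    refine (((hasDerivAt_neg t).exp.sub_const (exp (-x))).fun_pow (k + 1)).fun_neg.congr_deriv ?_
    rw [Nat.add_sub_cancel]
    push_cast
    ring
  rw [integral_Icc_eq_integral_Ioc, ← intervalIntegral.integral_of_le hx,
    intervalIntegral.integral_eq_sub_of_hasDerivAt hderiv
      (Continuous.intervalIntegrable (by fun_prop) _ _)]
  simp [maxExpCDF, hx]

lemma expLaw_density_mul_maxExpCDF (k : ℕ) (x t : ℝ) :
    (if 0 ≤ t then ((k : ℝ) + 1) * exp (-((k : ℝ) + 1) * t) else 0) * maxExpCDF k (x - t)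
      = (Set.Icc 0 x).indicator
          (fun t => (k + 1) * exp (-t) * (exp (-t) - exp (-x)) ^ k) t := by
  by_cases h0 : 0 ≤ t
  · by_cases h1 : t ≤ x
    · rw [Set.indicator_of_mem (Set.mem_Icc.2 ⟨h0, h1⟩), if_pos h0, maxExpCDF,
        if_pos (sub_nonneg.2 h1)]
      have hsplit : exp (-((k : ℝ) + 1) * t) = exp (-t) * exp (-t) ^ k := by
        rw [← exp_nat_mul, ← exp_add]; ring_nf
      have hfactor : exp (-t) * (1 - exp (-(x - t))) = exp (-t) - exp (-x) := by
        rw [mul_sub, mul_one, ← exp_add]; ring_nf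
      rw [hsplit, ← hfactor, mul_pow]
      ring
    · simp [maxExpCDF, h1]
  · simp [h0]

lemma conv_expLaw_apply_Iic {ν : Measure ℝ} [SFinite ν] {k : ℕ}
    (hν : ∀ y, ν (Set.Iic y) = ENNReal.ofReal (maxExpCDF k y)) (x : ℝ) :
    (expLaw (k + 1) ∗ ν) (Set.Iic x) = ENNReal.ofReal (maxExpCDF (k + 1) x) := by
  set g : ℝ → ℝ := fun t => (k + 1) * exp (-t) * (exp (-t) - exp (-x)) ^ k
  have hg : IntegrableOn g (Set.Icc 0 x) := (by fun_prop : Continuous g).integrableOn_Icc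
  have hg_nonneg : 0 ≤ᵐ[volume.restrict (Set.Icc 0 x)] g :=
    (ae_restrict_mem measurableSet_Icc).mono fun t ht => by
      have : exp (-x) ≤ exp (-t) := exp_le_exp.2 (neg_le_neg ht.2)
      have : 0 ≤ exp (-t) - exp (-x) := sub_nonneg.2 this
      positivity
  have hintegrand : ∀ t, ENNReal.ofReal
        (if 0 ≤ t then ((k : ℝ) + 1) * exp (-((k : ℝ) + 1) * t) else 0)
        * ENNReal.ofReal (maxExpCDF k (x - t))
      = (Set.Icc 0 x).indicator (fun t => ENNReal.ofReal (g t)) t := by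
    intro t
    rw [← ENNReal.ofReal_mul (by positivity), expLaw_density_mul_maxExpCDF]
    by_cases ht : t ∈ Set.Icc 0 x <;> simp [ht, g]
  simp_rw [Measure.conv_apply measurableSet_Iic, Set.preimage_const_add_Iic, hν]
  rw [expLaw, lintegral_withDensity_eq_lintegral_mul _
      (Measurable.ite measurableSet_Ici (by fun_prop) measurable_const).ennreal_ofReal
      (g := fun t => ENNReal.ofReal (maxExpCDF k (x - t)))
      ((measurable_maxExpCDF k).comp (by fun_prop)).ennreal_ofReal]
  simp only [Pi.mul_apply, hintegrand]
  rw [lintegral_indicator measurableSet_Icc, ← ofReal_integral_eq_lintegral_ofReal hg hg_nonneg,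
    setIntegral_Icc_exp_mul_pow]

lemma map_sum_apply_Iic_of_expLaw {Ω : Type*} [MeasureSpace Ω]
    [IsProbabilityMeasure (ℙ : Measure Ω)]
    (n : ℕ) (E : Fin n → Ω → ℝ) (hmeas : ∀ i, Measurable (E i)) (hindep : iIndepFun E ℙ)
    (hlaw : ∀ i : Fin n, Measure.map (E i) ℙ = expLaw ((i : ℕ) + 1)) (y : ℝ) :
    Measure.map (∑ i, E i) ℙ (Set.Iic y) = ENNReal.ofReal (maxExpCDF n y) := by
  induction n generalizing y with
  | zero => by_cases hy : 0 ≤ y <;> simp [maxExpCDF, hy, Pi.zero_def]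
  | succ k ih =>
    set S := ∑ i : Fin k, E i.castSucc
    have hS : AEMeasurable S ℙ := Finset.aemeasurable_sum _ fun i _ => (hmeas _).aemeasurable
    have hindepS : IndepFun S (E (Fin.last k)) ℙ := by
      simpa [S] using hindep.indepFun_finsetSum_of_notMem hmeas
        (s := Finset.univ.map Fin.castSuccEmb) (i := Fin.last k) (by simp)
    have hSlaw := ih (fun i => E i.castSucc) (fun i => hmeas _)
      (hindep.precomp (Fin.castSucc_injective k)) (fun i => by simpa using hlaw i.castSucc)
    rw [Fin.sum_univ_castSucc, add_comm,
      hindepS.symm.map_add_eq_map_conv_map₀ (hmeas _).aemeasurable hS, hlaw, Fin.val_last]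
    exact conv_expLaw_apply_Iic hSlaw y

theorem stmt_0_general {Ω : Type*} [MeasureSpace Ω] [IsProbabilityMeasure (ℙ : Measure Ω)]
    (n : ℕ) (E : Fin n → Ω → ℝ)
    (hmeas : ∀ i, Measurable (E i))
    (hindep : iIndepFun E ℙ)
    (hlaw : ∀ i : Fin n, Measure.map (E i) ℙ = expLaw ((i : ℕ) + 1)) :
    ∀ x : ℝ, 0 ≤ x →
      ℙ {ω | ∑ i, E i ω ≤ x} = ENNReal.ofReal ((1 - Real.exp (-x)) ^ n) := by
  intro x hx
  have hcdf := map_sum_apply_Iic_of_expLaw n E hmeas hindep hlaw x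
  rw [Measure.map_apply_of_aemeasurable
      (Finset.aemeasurable_sum _ fun i _ => (hmeas i).aemeasurable) measurableSet_Iic,
    maxExpCDF, if_pos hx] at hcdf
  convert hcdf using 2
  ext ω
  simp [Finset.sum_apply]

/-- If `E 1, …, E n` are independent with `E i` exponential of rate `i`,
then `E 1 + ⋯ + E n` is distributed as the maximum of `n` i.i.d. rate-1 exponentials:
for every `x ≥ 0`, `P(E 1 + ⋯ + E n ≤ x) = (1 - exp (-x))^n`. -/
theorem stmt_0 {Ω : Type*} [MeasureSpace Ω] [IsProbabilityMeasure (ℙ : Measure Ω)]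
    (n : ℕ) (hn : 0 < n) (E : Fin n → Ω → ℝ)
    (hmeas : ∀ i, Measurable (E i))
    (hindep : iIndepFun E ℙ)
    (hlaw : ∀ i : Fin n, Measure.map (E i) ℙ = expLaw ((i : ℕ) + 1)) :
    ∀ x : ℝ, 0 ≤ x →
      ℙ {ω | ∑ i, E i ω ≤ x} = ENNReal.ofReal ((1 - Real.exp (-x)) ^ n) :=
  stmt_0_general n E hmeas hindep hlaw
end

section
/- Let a and b be positive integers, and let M_a and M_b be independent random variables distributed respectively as the maximum of a and of b i.i.d. rate-1 exponential random variables (equivalently, with cumulative distribution functions x ↦ (1 − e^{−x})^a and x ↦ (1 − e^{−x})^b on [0,∞)). Then P(M_a < M_b) = b/(a+b). -/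
open MeasureTheory ProbabilityTheory Real Set Filter Topology
open scoped ENNReal

/-!
By independence and Fubini, `P(M_a < M_b) = E[F_a(M_b)]`, where `F_a(x) = (1 - e^{-x})^a` is the
CDF of `M_a` (continuous, so `<` and `≤` give the same probability). The law of `M_b` has density
`b e^{-x} (1 - e^{-x})^{b-1}` on `(0, ∞)`, and `F_a` times this density is `b / (a + b)` times the
density of `M_{a+b}`, whose total mass is `1`.
-/

theorem ProbabilityTheory.IndepFun.measure_lt_eq_lintegral {Ω α : Type*} [MeasurableSpace Ω]
    {μ : Measure Ω} [IsFiniteMeasure μ] [MeasurableSpace α] [TopologicalSpace α]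
    [LinearOrder α] [OrderClosedTopology α] [SecondCountableTopology α] [OpensMeasurableSpace α]
    {X Y : Ω → α} (hX : Measurable X) (hY : Measurable Y) (h : IndepFun X Y μ) :
    μ {ω | X ω < Y ω} = ∫⁻ y, μ.map X (Iio y) ∂μ.map Y := by
  have hlt : MeasurableSet {p : α × α | p.1 < p.2} :=
    measurableSet_lt measurable_fst measurable_snd
  change μ ((fun ω ↦ (X ω, Y ω)) ⁻¹' {p : α × α | p.1 < p.2}) = _
  rw [← Measure.map_apply (hX.prodMk hY) hlt,
    (indepFun_iff_map_prod_eq_prod_map_map hX.aemeasurable hY.aemeasurable).1 h,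
    Measure.prod_apply_symm hlt]
  rfl

theorem setLIntegral_Ioc_ofReal_deriv_eq_sub {f f' : ℝ → ℝ} {a b : ℝ} (hab : a ≤ b)
    (hf : ContinuousOn f (Icc a b)) (hderiv : ∀ x ∈ Ioo a b, HasDerivAt f (f' x) x)
    (hint : IntegrableOn f' (Ioc a b)) (hnonneg : ∀ x ∈ Ioc a b, 0 ≤ f' x) :
    ∫⁻ x in Ioc a b, ENNReal.ofReal (f' x) = ENNReal.ofReal (f b - f a) := by
  rw [← ofReal_integral_eq_lintegral_ofReal hint
      (ae_restrict_of_forall_mem measurableSet_Ioc hnonneg),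
    ← intervalIntegral.integral_of_le hab,
    intervalIntegral.integral_eq_sub_of_hasDerivAt_of_le hab hf hderiv
      ((intervalIntegrable_iff_integrableOn_Ioc_of_le hab).2 hint)]

noncomputable def expMaxDensity (n : ℕ) (x : ℝ) : ℝ := n * exp (-x) * (1 - exp (-x)) ^ (n - 1)

-- The law of `M_n`.
noncomputable def expMaxMeasure (n : ℕ) : Measure ℝ :=
  (volume.restrict (Ioi 0)).withDensity fun x ↦ ENNReal.ofReal (expMaxDensity n x)

lemma continuous_expMaxDensity (n : ℕ) : Continuous (expMaxDensity n) := by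
  unfold expMaxDensity; fun_prop

lemma expMaxDensity_nonneg (n : ℕ) {x : ℝ} (hx : 0 ≤ x) : 0 ≤ expMaxDensity n x := by
  have : 0 ≤ 1 - exp (-x) := sub_nonneg.2 (exp_le_one_iff.2 (neg_nonpos.2 hx))
  unfold expMaxDensity; positivity

lemma hasDerivAt_one_sub_exp_neg_pow (n : ℕ) (x : ℝ) :
    HasDerivAt (fun x ↦ (1 - exp (-x)) ^ n) (expMaxDensity n x) x := by
  have h : HasDerivAt (fun x ↦ 1 - exp (-x)) (exp (-x)) x := by
    simpa using ((hasDerivAt_neg x).exp).const_sub 1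
  exact (h.pow n).congr_deriv (by rw [expMaxDensity]; ring)

lemma expMaxMeasure_Iic {n : ℕ} (hn : n ≠ 0) (x : ℝ) :
    expMaxMeasure n (Iic x) = ENNReal.ofReal (if 0 ≤ x then (1 - exp (-x)) ^ n else 0) := by
  rw [expMaxMeasure, withDensity_apply _ measurableSet_Iic,
    Measure.restrict_restrict measurableSet_Iic, Iic_inter_Ioi]
  split_ifs with hx
  · rw [setLIntegral_Ioc_ofReal_deriv_eq_sub hx (by fun_prop)
      (fun y _ ↦ hasDerivAt_one_sub_exp_neg_pow n y)
      (continuous_expMaxDensity n).integrableOn_Ioc (fun y hy ↦ expMaxDensity_nonneg n hy.1.le)]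
    simp [hn]
  · simp [Ioc_eq_empty (by linarith : ¬ (0:ℝ) < x)]

lemma expMaxMeasure_Iio (n : ℕ) (x : ℝ) : expMaxMeasure n (Iio x) = expMaxMeasure n (Iic x) :=
  measure_congr ((withDensity_absolutelyContinuous _ _).ae_eq Iio_ae_eq_Iic)

lemma ae_pos_expMaxMeasure (n : ℕ) : ∀ᵐ x ∂expMaxMeasure n, 0 < x :=
  (withDensity_absolutelyContinuous _ _).ae_le (ae_restrict_mem measurableSet_Ioi)

lemma isProbabilityMeasure_expMaxMeasure {n : ℕ} (hn : n ≠ 0) :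
    IsProbabilityMeasure (expMaxMeasure n) := by
  refine ⟨tendsto_nhds_unique (tendsto_measure_Iic_atTop _) ?_⟩
  have hF : Tendsto (fun x : ℝ ↦ (1 - exp (-x)) ^ n) atTop (𝓝 1) := by
    simpa using ((tendsto_exp_neg_atTop_nhds_zero.const_sub 1).pow n)
  refine (ENNReal.ofReal_one ▸ (ENNReal.tendsto_ofReal hF)).congr' ?_
  filter_upwards [eventually_ge_atTop 0] with x hx
  rw [expMaxMeasure_Iic hn, if_pos hx]

lemma map_eq_expMaxMeasure {Ω : Type*} [MeasurableSpace Ω] {μ : Measure Ω}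
    [IsProbabilityMeasure μ] {X : Ω → ℝ} (hX : Measurable X) {n : ℕ} (hn : n ≠ 0)
    (h : ∀ x, μ {ω | X ω ≤ x} = ENNReal.ofReal (if 0 ≤ x then (1 - exp (-x)) ^ n else 0)) :
    μ.map X = expMaxMeasure n := by
  have := isProbabilityMeasure_expMaxMeasure hn
  have := Measure.isProbabilityMeasure_map (μ := μ) hX.aemeasurable
  refine Measure.ext_of_Iic _ _ fun x ↦ ?_
  rw [Measure.map_apply hX measurableSet_Iic, expMaxMeasure_Iic hn, ← h]
  rfl

lemma one_sub_exp_neg_pow_mul_expMaxDensity (a : ℕ) {b : ℕ} (hb : b ≠ 0) (x : ℝ) :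
    (1 - exp (-x)) ^ a * expMaxDensity b x = b / (a + b) * expMaxDensity (a + b) x := by
  obtain ⟨c, rfl⟩ := Nat.exists_eq_succ_of_ne_zero hb
  have hab : (a : ℝ) + (c + 1) ≠ 0 := by positivity
  simp only [expMaxDensity, Nat.succ_sub_one, Nat.add_succ_sub_one, pow_add]
  push_cast
  field_simp

lemma lintegral_one_sub_exp_neg_pow_expMaxMeasure (a : ℕ) {b : ℕ} (hb : b ≠ 0) :
    ∫⁻ x, ENNReal.ofReal ((1 - exp (-x)) ^ a) ∂expMaxMeasure b
      = ENNReal.ofReal (b / (a + b)) := by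
  have := isProbabilityMeasure_expMaxMeasure (n := a + b) (by omega)
  have hdens : ∀ x ∈ Ioi (0 : ℝ),
      ENNReal.ofReal (expMaxDensity b x) * ENNReal.ofReal ((1 - exp (-x)) ^ a)
        = ENNReal.ofReal (b / (a + b)) * ENNReal.ofReal (expMaxDensity (a + b) x) := by
    intro x hx
    rw [← ENNReal.ofReal_mul (expMaxDensity_nonneg b hx.le),
      ← ENNReal.ofReal_mul (by positivity), mul_comm, one_sub_exp_neg_pow_mul_expMaxDensity a hb]
  have hmass : ∫⁻ x in Ioi 0, ENNReal.ofReal (expMaxDensity (a + b) x) = 1 := by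
    rw [← measure_univ (μ := expMaxMeasure (a + b)), expMaxMeasure,
      withDensity_apply _ MeasurableSet.univ, Measure.restrict_univ]
  rw [expMaxMeasure, lintegral_withDensity_eq_lintegral_mul _
    (continuous_expMaxDensity b).measurable.ennreal_ofReal (by fun_prop)]
  simp only [Pi.mul_apply]
  rw [setLIntegral_congr_fun measurableSet_Ioi hdens, lintegral_const_mul _
    (continuous_expMaxDensity _).measurable.ennreal_ofReal, hmass, mul_one]

/-- If `Ma` and `Mb` are independent, distributed respectively as the
maximum of `a` and of `b` i.i.d. rate-1 exponentials (CDFs `x ↦ (1 - exp (-x))^a` and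
`x ↦ (1 - exp (-x))^b` on `[0,∞)`), then `P(Ma < Mb) = b / (a + b)`. -/
theorem stmt_3 {Ω : Type*} [MeasureSpace Ω] [IsProbabilityMeasure (ℙ : Measure Ω)]
    (a b : ℕ) (ha : 0 < a) (hb : 0 < b)
    (Ma Mb : Ω → ℝ) (hMa : Measurable Ma) (hMb : Measurable Mb)
    (hMalaw : ∀ x : ℝ,
      ℙ {ω | Ma ω ≤ x} = ENNReal.ofReal (if 0 ≤ x then (1 - Real.exp (-x)) ^ a else 0))
    (hMblaw : ∀ x : ℝ,
      ℙ {ω | Mb ω ≤ x} = ENNReal.ofReal (if 0 ≤ x then (1 - Real.exp (-x)) ^ b else 0))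
    (hindep : IndepFun Ma Mb ℙ) :
    (ℙ {ω | Ma ω < Mb ω}).toReal = (b : ℝ) / ((a : ℝ) + (b : ℝ)) := by
  have hcdf : ∀ᵐ y ∂expMaxMeasure b,
      expMaxMeasure a (Iio y) = ENNReal.ofReal ((1 - exp (-y)) ^ a) := by
    filter_upwards [ae_pos_expMaxMeasure b] with y hy
    rw [expMaxMeasure_Iio, expMaxMeasure_Iic ha.ne', if_pos hy.le]
  rw [hindep.measure_lt_eq_lintegral hMa hMb, map_eq_expMaxMeasure hMa ha.ne' hMalaw,
    map_eq_expMaxMeasure hMb hb.ne' hMblaw, lintegral_congr_ae hcdf,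
    lintegral_one_sub_exp_neg_pow_expMaxMeasure a hb.ne', ENNReal.toReal_ofReal (by positivity)]
end

section
/- Let W_1, …, W_n be independent random variables, where W_i is Poisson distributed with parameter w_i > 0, and let S = W_1 + ⋯ + W_n. Then E[ W_1 / S | S > 0 ] = w_1 / (w_1 + ⋯ + w_n). (This is the mathematical content of the proposition that, conditioned on not all nodes generating 0, the weighted randomized election algorithm elects each node u with probability proportional to its weight w_u.) -/
open MeasureTheory ProbabilityTheory Real

/-- Convolution identity for Poisson weights. -/
lemma poisson_conv (a b : ℝ) (m : ℕ) :
    ∑ k ∈ Finset.range (m + 1),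
      (Real.exp (-a) * a ^ k / (k.factorial : ℝ)) *
        (Real.exp (-b) * b ^ (m - k) / ((m - k).factorial : ℝ))
      = Real.exp (-(a + b)) * (a + b) ^ m / (m.factorial : ℝ) := by
  have h : ∀ k ∈ Finset.range (m + 1),
      (Real.exp (-a) * a ^ k / (k.factorial : ℝ)) *
        (Real.exp (-b) * b ^ (m - k) / ((m - k).factorial : ℝ))
      = Real.exp (-(a + b)) / (m.factorial : ℝ) *
          (a ^ k * b ^ (m - k) * (m.choose k : ℝ)) := by
    intro k hk
    have hk' : k ≤ m := Nat.lt_succ_iff.mp (Finset.mem_range.mp hk)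
    rw [Nat.cast_choose ℝ hk', neg_add, Real.exp_add]
    have h1 : (k.factorial : ℝ) ≠ 0 := Nat.cast_ne_zero.mpr k.factorial_ne_zero
    have h2 : ((m - k).factorial : ℝ) ≠ 0 := Nat.cast_ne_zero.mpr (m - k).factorial_ne_zero
    have h3 : (m.factorial : ℝ) ≠ 0 := Nat.cast_ne_zero.mpr m.factorial_ne_zero
    field_simp
  rw [Finset.sum_congr rfl h, ← Finset.mul_sum, ← add_pow]
  ring

/-- Sum of independent Poisson random variables is Poisson. -/
lemma poisson_add {Ω : Type*} [MeasureSpace Ω] {X Y : Ω → ℕ}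
    (hX : Measurable X) (hY : Measurable Y)
    (h : IndepFun X Y ℙ) {a b : ℝ} (ha : 0 ≤ a) (hb : 0 ≤ b)
    (hlX : ∀ m : ℕ, ℙ {ω | X ω = m}
      = ENNReal.ofReal (Real.exp (-a) * a ^ m / (m.factorial : ℝ)))
    (hlY : ∀ m : ℕ, ℙ {ω | Y ω = m}
      = ENNReal.ofReal (Real.exp (-b) * b ^ m / (m.factorial : ℝ)))
    (m : ℕ) :
    ℙ {ω | X ω + Y ω = m}
      = ENNReal.ofReal (Real.exp (-(a + b)) * (a + b) ^ m / (m.factorial : ℝ)) := by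
  have hset : {ω | X ω + Y ω = m}
      = ⋃ k ∈ Finset.range (m + 1), (X ⁻¹' {k} ∩ Y ⁻¹' {m - k}) := by
    ext ω
    simp only [Set.mem_setOf_eq, Set.mem_iUnion, Finset.mem_range, Set.mem_inter_iff,
      Set.mem_preimage, Set.mem_singleton_iff]
    constructor
    · intro hs
      exact ⟨X ω, by omega, rfl, by omega⟩
    · rintro ⟨k, hk, h1, h2⟩
      omega
  rw [hset, measure_biUnion_finset]
  · have hterm : ∀ k ∈ Finset.range (m + 1),
        ℙ (X ⁻¹' {k} ∩ Y ⁻¹' {m - k})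
          = ENNReal.ofReal ((Real.exp (-a) * a ^ k / (k.factorial : ℝ)) *
              (Real.exp (-b) * b ^ (m - k) / ((m - k).factorial : ℝ))) := by
      intro k _
      rw [h.measure_inter_preimage_eq_mul _ _ (measurableSet_singleton k)
        (measurableSet_singleton (m - k))]
      have h1 : X ⁻¹' {k} = {ω | X ω = k} := rfl
      have h2 : Y ⁻¹' {m - k} = {ω | Y ω = m - k} := rfl
      rw [h1, h2, hlX, hlY, ← ENNReal.ofReal_mul (by positivity)]
    rw [Finset.sum_congr rfl hterm,
      ← ENNReal.ofReal_sum_of_nonneg (fun k _ => by positivity), poisson_conv]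
  · intro i _ j _ hij
    simp only [Function.onFun, Set.disjoint_left]
    rintro ω ⟨h1, -⟩ ⟨h2, -⟩
    exact hij (h1.symm.trans h2)
  · exact fun k _ => (hX (measurableSet_singleton k)).inter (hY (measurableSet_singleton _))

/-- Law of a finite sum of independent Poisson random variables. -/
lemma poisson_sum {Ω : Type*} [MeasureSpace Ω] [IsProbabilityMeasure (ℙ : Measure Ω)]
    {n : ℕ} {W : Fin n → Ω → ℕ} {w : Fin n → ℝ} (hw : ∀ i, 0 ≤ w i)
    (hmeas : ∀ i, Measurable (W i))
    (hindep : iIndepFun W ℙ)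
    (hlaw : ∀ i : Fin n, ∀ m : ℕ,
      ℙ {ω | W i ω = m} = ENNReal.ofReal (Real.exp (-(w i)) * (w i) ^ m / (m.factorial : ℝ)))
    (s : Finset (Fin n)) (m : ℕ) :
    ℙ {ω | ∑ i ∈ s, W i ω = m}
      = ENNReal.ofReal (Real.exp (-(∑ i ∈ s, w i)) * (∑ i ∈ s, w i) ^ m / (m.factorial : ℝ)) := by
  classical
  induction s using Finset.induction_on generalizing m with
  | empty =>
    simp only [Finset.sum_empty]
    rcases Nat.eq_zero_or_pos m with hm | hm
    · subst hm
      have : {ω : Ω | (0 : ℕ) = 0} = Set.univ := by ext ω; simp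
      rw [this]
      simp
    · have : {ω : Ω | (0 : ℕ) = m} = ∅ := by ext ω; simp; omega
      rw [this]
      rw [zero_pow (by omega)]
      simp
  | @insert i s' hi ih =>
    have hind : IndepFun (W i) (fun ω => ∑ j ∈ s', W j ω) ℙ := by
      have := (hindep.indepFun_finset_sum_of_notMem hmeas hi).symm
      have heq : (∑ j ∈ s', W j) = fun ω => ∑ j ∈ s', W j ω := by
        funext ω; simp [Finset.sum_apply]
      rwa [heq] at this
    have hsum : ∀ m', ℙ {ω | ∑ j ∈ s', W j ω = m'}
        = ENNReal.ofReal (Real.exp (-(∑ j ∈ s', w j)) * (∑ j ∈ s', w j) ^ m'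
          / (m'.factorial : ℝ)) := ih
    have := poisson_add (hmeas i) (Finset.measurable_sum s' fun j _ => hmeas j)
      hind (hw i) (Finset.sum_nonneg fun j _ => hw j) (hlaw i) hsum m
    simp only [Finset.sum_insert hi]
    exact this

/-- If `W 1, …, W n` are independent Poisson random variables with
parameters `w 1, …, w n > 0` and `S = W 1 + ⋯ + W n`, then
`E[W 1 / S | S > 0] = w 1 / (w 1 + ⋯ + w n)`, where `E[Z | A] = E[Z · 1_A] / P(A)`.
(This is the statement that, conditioned on not all nodes generating `0`, the weighted
randomized election algorithm elects each node with probability proportional to its weight.) -/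
theorem stmt_8 {Ω : Type*} [MeasureSpace Ω] [IsProbabilityMeasure (ℙ : Measure Ω)]
    (n : ℕ) (hn : 0 < n) (W : Fin n → Ω → ℕ) (w : Fin n → ℝ) (hw : ∀ i, 0 < w i)
    (hmeas : ∀ i, Measurable (W i))
    (hindep : iIndepFun W ℙ)
    -- each `W i` is Poisson distributed with parameter `w i`
    (hlaw : ∀ i : Fin n, ∀ m : ℕ,
      ℙ {ω | W i ω = m} = ENNReal.ofReal (Real.exp (-(w i)) * (w i) ^ m / (m.factorial : ℝ))) :
    (∫ ω in {ω | 0 < ∑ i, W i ω}, ((W ⟨0, hn⟩ ω : ℝ) / ((∑ i, W i ω : ℕ) : ℝ)) ∂ℙ)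
        / (ℙ {ω | 0 < ∑ i, W i ω}).toReal
      = w ⟨0, hn⟩ / ∑ i, w i := by
  classical
  set i0 : Fin n := ⟨0, hn⟩ with hi0def
  set T : Ω → ℕ := fun ω => ∑ i ∈ Finset.univ.erase i0, W i ω with hTdef
  set a : ℝ := w i0 with hadef
  set b : ℝ := ∑ i ∈ Finset.univ.erase i0, w i with hbdef
  have hw' : ∀ i, 0 ≤ w i := fun i => (hw i).le
  have ha : 0 < a := hw i0
  have hb : 0 ≤ b := Finset.sum_nonneg fun i _ => hw' i
  have hlam : a + b = ∑ i, w i := Finset.add_sum_erase _ w (Finset.mem_univ i0)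
  have hlampos : 0 < a + b := by linarith
  have hlamne : a + b ≠ 0 := ne_of_gt hlampos
  have hsplit : ∀ ω, ∑ i, W i ω = W i0 ω + T ω := fun ω =>
    (Finset.add_sum_erase _ (fun i => W i ω) (Finset.mem_univ i0)).symm
  have hTmeas : Measurable T := Finset.measurable_sum _ fun i _ => hmeas i
  have hT : ∀ m : ℕ, ℙ {ω | T ω = m}
      = ENNReal.ofReal (Real.exp (-b) * b ^ m / (m.factorial : ℝ)) :=
    poisson_sum hw' hmeas hindep hlaw _
  have hind : IndepFun (W i0) T ℙ := by
    have := (hindep.indepFun_finset_sum_of_notMem hmeas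
      (Finset.notMem_erase i0 Finset.univ)).symm
    have heq : (∑ j ∈ Finset.univ.erase i0, W j) = T := by
      funext ω; simp [hTdef, Finset.sum_apply]
    rwa [heq] at this
  -- Poisson weights
  set pa : ℕ → ℝ := fun k => Real.exp (-a) * a ^ k / (k.factorial : ℝ) with hpadef
  set pb : ℕ → ℝ := fun k => Real.exp (-b) * b ^ k / (k.factorial : ℝ) with hpbdef
  have hpanneg : ∀ k, 0 ≤ pa k := fun k => by
    have := ha.le; positivity
  have hpbnneg : ∀ k, 0 ≤ pb k := fun k => by positivity
  have hpasum : Summable pa := by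
    simpa [hpadef, mul_div_assoc] using
      (Real.summable_pow_div_factorial a).mul_left (Real.exp (-a))
  have hpbsum : Summable pb := by
    simpa [hpbdef, mul_div_assoc] using
      (Real.summable_pow_div_factorial b).mul_left (Real.exp (-b))
  -- the pushforward to ℕ × ℕ
  set φ : Ω → ℕ × ℕ := fun ω => (W i0 ω, T ω) with hφdef
  have hφ : Measurable φ := (hmeas i0).prodMk hTmeas
  set μ : Measure (ℕ × ℕ) := Measure.map φ ℙ with hμdef
  have : IsProbabilityMeasure μ := Measure.isProbabilityMeasure_map hφ.aemeasurable
  set F : ℕ × ℕ → ℝ := fun p => (p.1 : ℝ) / (((p.1 + p.2 : ℕ) : ℝ)) with hFdef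
  have hF0 : ∀ p : ℕ × ℕ, p.1 = 0 → F p = 0 := by
    intro p hp; simp [hFdef, hp]
  have hFnonneg : ∀ p, 0 ≤ F p := fun p => by positivity
  have hFle1 : ∀ p, F p ≤ 1 := by
    intro p
    rcases Nat.eq_zero_or_pos (p.1 + p.2) with h | h
    · have : p.1 = 0 := by omega
      rw [hF0 p this]; norm_num
    · apply div_le_one_of_le₀
      · exact_mod_cast Nat.le_add_right p.1 p.2
      · positivity
  have hμp : ∀ p : ℕ × ℕ, (μ {p}).toReal = pa p.1 * pb p.2 := by
    rintro ⟨k, j⟩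
    rw [hμdef, Measure.map_apply hφ (measurableSet_singleton _)]
    have hpre : φ ⁻¹' {(k, j)} = (W i0) ⁻¹' {k} ∩ T ⁻¹' {j} := by
      ext ω; simp [hφdef, Prod.ext_iff]
    rw [hpre, hind.measure_inter_preimage_eq_mul _ _ (measurableSet_singleton _)
      (measurableSet_singleton _)]
    have h1 : (W i0) ⁻¹' {k} = {ω | W i0 ω = k} := rfl
    have h2 : T ⁻¹' {j} = {ω | T ω = j} := rfl
    rw [h1, h2, hlaw i0 k, hT j, ← ENNReal.ofReal_mul (by positivity)]
    exact ENNReal.toReal_ofReal (by positivity)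
  -- the numerator as a sum over ℕ × ℕ
  have hIF : Integrable F μ := by
    refine (integrable_const (1 : ℝ)).mono'
      ((measurable_of_countable F).aestronglyMeasurable) ?_
    filter_upwards with p
    rw [Real.norm_eq_abs, abs_of_nonneg (hFnonneg p)]
    exact hFle1 p
  have hsetA : MeasurableSet {p : ℕ × ℕ | 0 < p.1 + p.2} :=
    (Set.to_countable _).measurableSet
  have hnum : (∫ ω in {ω | 0 < ∑ i, W i ω}, ((W i0 ω : ℝ) / ((∑ i, W i ω : ℕ) : ℝ)) ∂ℙ)
      = ∑' p : ℕ × ℕ, pa p.1 * pb p.2 * F p := by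
    have hseteq : {ω | 0 < ∑ i, W i ω} = φ ⁻¹' {p : ℕ × ℕ | 0 < p.1 + p.2} := by
      ext ω; simp [hφdef, hsplit ω]
    have hfeq : ∀ ω, ((W i0 ω : ℝ) / ((∑ i, W i ω : ℕ) : ℝ)) = F (φ ω) := by
      intro ω; simp only [hFdef, hφdef, hsplit ω]
    rw [hseteq]
    rw [show (∫ ω in φ ⁻¹' {p : ℕ × ℕ | 0 < p.1 + p.2},
        ((W i0 ω : ℝ) / ((∑ i, W i ω : ℕ) : ℝ)) ∂ℙ)
      = ∫ ω in φ ⁻¹' {p : ℕ × ℕ | 0 < p.1 + p.2}, F (φ ω) ∂ℙ from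
        integral_congr_ae (Filter.Eventually.of_forall fun ω => hfeq ω)]
    rw [← setIntegral_map hsetA hIF.aestronglyMeasurable hφ.aemeasurable]
    rw [setIntegral_eq_integral_of_forall_compl_eq_zero (fun p hp => by
      have : p.1 = 0 := by
        simp only [Set.mem_setOf_eq, not_lt, Nat.le_zero] at hp
        omega
      exact hF0 p this)]
    rw [integral_countable' hIF]
    refine tsum_congr fun p => ?_
    rw [Measure.real_def, hμp p, smul_eq_mul]
  -- summability facts
  have hgbound : Summable (fun p : ℕ × ℕ => pa p.1 * pb p.2) :=
    hpasum.mul_of_nonneg hpbsum hpanneg hpbnneg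
  have hg : Summable (fun p : ℕ × ℕ => pa p.1 * pb p.2 * F p) := by
    refine Summable.of_nonneg_of_le (fun p => ?_) (fun p => ?_) hgbound
    · exact mul_nonneg (mul_nonneg (hpanneg _) (hpbnneg _)) (hFnonneg p)
    · exact mul_le_of_le_one_right (mul_nonneg (hpanneg _) (hpbnneg _)) (hFle1 p)
  set g : ℕ × ℕ → ℝ := fun p => pa p.1 * pb p.2 * F p with hgdef
  have hgsig : Summable (g ∘ Finset.HasAntidiagonal.sigmaAntidiagonalEquivProd) :=
    Finset.HasAntidiagonal.sigmaAntidiagonalEquivProd.summable_iff.mpr hg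
  have hgsig2 : Summable
      (fun x : Σ n : ℕ, { p : ℕ × ℕ // p ∈ Finset.HasAntidiagonal.antidiagonal n } => g x.2) :=
    hgsig.congr fun x => rfl
  have hdiag : ∑' p : ℕ × ℕ, g p = ∑' n : ℕ, ∑ p ∈ Finset.HasAntidiagonal.antidiagonal n, g p := by
    calc ∑' p : ℕ × ℕ, g p
        = ∑' x : Σ n : ℕ, { p : ℕ × ℕ // p ∈ Finset.HasAntidiagonal.antidiagonal n }, g x.2 :=
          ((Finset.HasAntidiagonal.sigmaAntidiagonalEquivProd (A := ℕ)).tsum_eq g).symm.trans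
            (tsum_congr fun x => rfl)
      _ = ∑' n : ℕ, ∑' c : { p : ℕ × ℕ // p ∈ Finset.HasAntidiagonal.antidiagonal n }, g c :=
          hgsig2.tsum_sigma
      _ = ∑' n : ℕ, ∑ p ∈ Finset.HasAntidiagonal.antidiagonal n, g p :=
          tsum_congr fun n => Finset.tsum_subtype _ g
  have hh : Summable (fun n : ℕ => ∑ p ∈ Finset.HasAntidiagonal.antidiagonal n, g p) := by
    refine hgsig2.sigma.congr fun n => ?_
    exact Finset.tsum_subtype _ g
  have hant : ∀ n : ℕ, ∑ p ∈ Finset.HasAntidiagonal.antidiagonal n, g p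
      = ∑ k ∈ Finset.range (n + 1), g (k, n - k) :=
    fun n => Finset.Nat.sum_antidiagonal_eq_sum_range_succ_mk g n
  have hh0 : ∑ p ∈ Finset.HasAntidiagonal.antidiagonal 0, g p = 0 := by
    rw [hant]
    simp [hgdef, hFdef]
  have hhn : ∀ n : ℕ, ∑ p ∈ Finset.HasAntidiagonal.antidiagonal (n + 1), g p
      = a / (a + b) * (Real.exp (-(a + b)) * (a + b) ^ (n + 1) / ((n + 1).factorial : ℝ)) := by
    intro n
    rw [hant, Finset.sum_range_succ']
    have hzero : g (0, n + 1 - 0) = 0 := by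
      have h : F (0, n + 1 - 0) = 0 := hF0 _ rfl
      simp only [hgdef]
      rw [h, mul_zero]
    rw [hzero, add_zero]
    have hterm : ∀ i ∈ Finset.range (n + 1),
        g (i + 1, n + 1 - (i + 1))
        = a / ((n : ℝ) + 1) *
            ((Real.exp (-a) * a ^ i / (i.factorial : ℝ)) *
              (Real.exp (-b) * b ^ (n - i) / ((n - i).factorial : ℝ))) := by
      intro i hi
      have hi' : i ≤ n := Nat.lt_succ_iff.mp (Finset.mem_range.mp hi)
      have h1 : n + 1 - (i + 1) = n - i := by omega
      have h2 : (i + 1) + (n - i) = n + 1 := by omega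
      simp only [hgdef, hpadef, hpbdef, hFdef, h1, h2]
      have hfact : ((i + 1).factorial : ℝ) = ((i : ℝ) + 1) * (i.factorial : ℝ) := by
        rw [Nat.factorial_succ]; push_cast; ring
      have hne1 : (i.factorial : ℝ) ≠ 0 := Nat.cast_ne_zero.mpr i.factorial_ne_zero
      have hne2 : ((n - i).factorial : ℝ) ≠ 0 := Nat.cast_ne_zero.mpr (n - i).factorial_ne_zero
      have hne3 : (i : ℝ) + 1 ≠ 0 := by positivity
      have hne4 : (n : ℝ) + 1 ≠ 0 := by positivity
      push_cast
      rw [hfact]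
      field_simp
      ring
    rw [Finset.sum_congr rfl hterm, ← Finset.mul_sum, poisson_conv a b n]
    have hfact : ((n + 1).factorial : ℝ) = ((n : ℝ) + 1) * (n.factorial : ℝ) := by
      rw [Nat.factorial_succ]; push_cast; ring
    have hne : (n.factorial : ℝ) ≠ 0 := Nat.cast_ne_zero.mpr n.factorial_ne_zero
    have hne4 : (n : ℝ) + 1 ≠ 0 := by positivity
    rw [hfact, pow_succ]
    field_simp
  have hexp : ∑' m : ℕ, (a + b) ^ m / (m.factorial : ℝ) = Real.exp (a + b) := by
    rw [Real.exp_eq_exp_ℝ, NormedSpace.exp_eq_tsum_div]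
  have hexp' : ∑' m : ℕ, (a + b) ^ (m + 1) / ((m + 1).factorial : ℝ)
      = Real.exp (a + b) - 1 := by
    have hs := Real.summable_pow_div_factorial (a + b)
    have h0 := Summable.tsum_eq_zero_add hs
    rw [hexp] at h0
    simp only [pow_zero, Nat.factorial_zero, Nat.cast_one, div_one] at h0
    linarith
  have htsum : ∑' p : ℕ × ℕ, g p = a / (a + b) * (1 - Real.exp (-(a + b))) := by
    rw [hdiag, Summable.tsum_eq_zero_add hh, hh0, zero_add, tsum_congr hhn, tsum_mul_left]
    have : (fun m : ℕ => Real.exp (-(a + b)) * (a + b) ^ (m + 1) / ((m + 1).factorial : ℝ))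
        = fun m : ℕ => Real.exp (-(a + b)) * ((a + b) ^ (m + 1) / ((m + 1).factorial : ℝ)) := by
      funext m; ring
    rw [this, tsum_mul_left, hexp']
    have hmul : Real.exp (-(a + b)) * Real.exp (a + b) = 1 := by
      rw [← Real.exp_add, show -(a + b) + (a + b) = 0 by ring, Real.exp_zero]
    linear_combination (a / (a + b)) * hmul
  have hden : (ℙ {ω | 0 < ∑ i, W i ω}).toReal = 1 - Real.exp (-(a + b)) := by
    have hS : {ω | 0 < ∑ i, W i ω} = {ω | ∑ i, W i ω = 0}ᶜ := by
      ext ω; simp [pos_iff_ne_zero]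
    have hms : MeasurableSet {ω | ∑ i, W i ω = 0} :=
      (Finset.measurable_sum Finset.univ fun i _ => hmeas i) (measurableSet_singleton 0)
    rw [hS, prob_compl_eq_one_sub hms,
      poisson_sum hw' hmeas hindep hlaw Finset.univ 0]
    rw [pow_zero, Nat.factorial_zero, Nat.cast_one, mul_one, div_one, ← hlam]
    have h1 : Real.exp (-(a + b)) ≤ 1 := by
      rw [← Real.exp_zero]; exact Real.exp_le_exp.mpr (by linarith)
    rw [← ENNReal.ofReal_one, ← ENNReal.ofReal_sub _ (Real.exp_nonneg _),
      ENNReal.toReal_ofReal (by linarith)]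
  have hEne : 1 - Real.exp (-(a + b)) ≠ 0 := by
    have : Real.exp (-(a + b)) < 1 := by
      rw [← Real.exp_zero]; exact Real.exp_lt_exp.mpr (by linarith)
    linarith
  rw [hnum, hden]
  rw [show (∑' p : ℕ × ℕ, pa p.1 * pb p.2 * F p) = ∑' p : ℕ × ℕ, g p from rfl, htsum, ← hlam]
  rw [mul_div_assoc, div_self hEne, mul_one]
end

section
/- Let X and X' be i.i.d. real random variables whose common law has density f(t) = 1_{t ≥ 0} · e^{−1/(2t)} / √(2π t³) (the stable distribution of index 1/2), and let m and n be positive integers. Then P( m² X < n² X' ) = (2/π) · arctan(n/m). Equivalently, if S_m is a sum of m i.i.d. copies of X and S'_n is an independent sum of n i.i.d. copies of X, then P(S_m < S'_n) = (2/π) arctan(n/m). -/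
open MeasureTheory ProbabilityTheory Real

section Aux

open Set Filter Topology
open scoped ENNReal

private lemma lintegral_image_eq_lintegral_abs_deriv_mul'' {s : Set ℝ} {f f' : ℝ → ℝ}
    (hs : MeasurableSet s) (hf' : ∀ x ∈ s, HasDerivWithinAt f (f' x) s x)
    (hf : Set.InjOn f s) (g : ℝ → ℝ≥0∞) :
    ∫⁻ x in f '' s, g x = ∫⁻ x in s, ENNReal.ofReal |f' x| * g (f x) := by
  simpa only [ContinuousLinearMap.det_toSpanSingleton] using
    lintegral_image_eq_lintegral_abs_det_fderiv_mul volume hs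
      (fun x hx => (hf' x hx).hasFDerivWithinAt) hf g

private lemma my_lintegral_comp_polarCoord_symm (f : ℝ × ℝ → ℝ≥0∞) :
    ∫⁻ p in polarCoord.target, ENNReal.ofReal p.1 * f (polarCoord.symm p) = ∫⁻ p, f p := by
  set B : ℝ × ℝ → ℝ × ℝ →L[ℝ] ℝ × ℝ := fun p =>
    LinearMap.toContinuousLinearMap (Matrix.toLin (Module.Basis.finTwoProd ℝ) (Module.Basis.finTwoProd ℝ)
      !![cos p.2, -p.1 * sin p.2; sin p.2, p.1 * cos p.2])
  have B_det : ∀ p, (B p).det = p.1 := by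
    intro p
    conv_rhs => rw [← one_mul p.1, ← cos_sq_add_sin_sq p.2]
    simp only [B, neg_mul, LinearMap.det_toContinuousLinearMap, LinearMap.det_toLin,
      Matrix.det_fin_two_of, sub_neg_eq_add]
    ring
  symm
  calc
    ∫⁻ p, f p = ∫⁻ p in polarCoord.source, f p := by
      rw [← setLIntegral_univ]
      exact (setLIntegral_congr polarCoord_source_ae_eq_univ.symm)
    _ = ∫⁻ p in polarCoord.target, ENNReal.ofReal |(B p).det| * f (polarCoord.symm p) := by
      have h := lintegral_image_eq_lintegral_abs_det_fderiv_mul volume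
        polarCoord.open_target.measurableSet
        (fun p _ => (hasFDerivAt_polarCoord_symm p).hasFDerivWithinAt)
        polarCoord.symm.injOn f
      rwa [polarCoord.symm_image_target_eq_source] at h
    _ = ∫⁻ p in polarCoord.target, ENNReal.ofReal p.1 * f (polarCoord.symm p) := by
      refine setLIntegral_congr_fun polarCoord.open_target.measurableSet
        (fun p hp => ?_)
      rw [B_det, abs_of_pos]
      exact hp.1

private lemma lintegral_Ioi_zero_ext (F : ℝ → ℝ≥0∞) (hF : ∀ x ≤ 0, F x = 0) :
    ∫⁻ x in Set.Ioi (0:ℝ), F x = ∫⁻ x, F x := by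
  rw [← lintegral_indicator measurableSet_Ioi]
  congr 1
  ext x
  by_cases hx : x ∈ Set.Ioi (0:ℝ)
  · rw [Set.indicator_of_mem hx]
  · rw [Set.indicator_of_notMem hx, hF x (by simpa using hx)]

private lemma cond_iff' {a b u v : ℝ} (ha : 0 < a) (hb : 0 < b) (hu : 0 < u) (hv : 0 < v) :
    a^2 * (u^2)⁻¹ < b^2 * (v^2)⁻¹ ↔ a * v < b * u := by
  rw [← div_eq_mul_inv, ← div_eq_mul_inv, div_lt_div_iff₀ (by positivity) (by positivity)]
  constructor
  · intro h
    by_contra h'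
    push_neg at h'
    nlinarith [mul_pos ha hv, mul_pos hb hu]
  · intro h
    nlinarith [mul_pos ha hv, mul_pos hb hu]

private lemma angle_iff' {a b r θ : ℝ} (ha : 0 < a) (hb : 0 < b) (hr : 0 < r)
    (hθ : θ ∈ Ioo (-π) π) :
    (0 < r * Real.cos θ ∧ 0 < r * Real.sin θ ∧ a * (r * Real.sin θ) < b * (r * Real.cos θ))
      ↔ θ ∈ Ioo 0 (Real.arctan (b / a)) := by
  constructor
  · rintro ⟨h1, h2, h3⟩
    have hc : 0 < Real.cos θ := by
      by_contra h; push_neg at h; nlinarith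
    have hs : 0 < Real.sin θ := by
      by_contra h; push_neg at h; nlinarith
    have hθ0 : 0 < θ := by
      by_contra h
      push_neg at h
      exact absurd (Real.sin_nonpos_of_nonpos_of_neg_pi_le h hθ.1.le) (not_le.mpr hs)
    have hθ2 : θ < π / 2 := by
      by_contra h
      push_neg at h
      exact absurd (Real.cos_nonpos_of_pi_div_two_le_of_le h (by linarith [hθ.2])) (not_le.mpr hc)
    have h3' : a * Real.sin θ < b * Real.cos θ := by
      by_contra h'
      push_neg at h'
      nlinarith
    have htan : Real.tan θ < b / a := by
      rw [Real.tan_eq_sin_div_cos, div_lt_div_iff₀ hc ha]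
      linarith
    refine ⟨hθ0, ?_⟩
    calc θ = Real.arctan (Real.tan θ) := (Real.arctan_tan (by linarith) hθ2).symm
      _ < Real.arctan (b / a) := Real.arctan_strictMono htan
  · rintro ⟨h0, h1⟩
    have hA : Real.arctan (b / a) < π / 2 := Real.arctan_lt_pi_div_two _
    have hθ2 : θ < π / 2 := h1.trans hA
    have hc : 0 < Real.cos θ := Real.cos_pos_of_mem_Ioo ⟨by linarith, hθ2⟩
    have hs : 0 < Real.sin θ := Real.sin_pos_of_pos_of_lt_pi h0 (by linarith [Real.pi_pos])
    have htan : Real.tan θ < Real.tan (Real.arctan (b / a)) :=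
      Real.tan_lt_tan_of_lt_of_lt_pi_div_two (by linarith) hA h1
    rw [Real.tan_arctan, Real.tan_eq_sin_div_cos, div_lt_div_iff₀ hc ha] at htan
    exact ⟨mul_pos hr hc, mul_pos hr hs, by nlinarith⟩

private lemma phi_image : (fun v : ℝ => (v^2)⁻¹) '' Ioi 0 = Ioi 0 := by
  ext y
  constructor
  · rintro ⟨v, hv, rfl⟩
    exact inv_pos.mpr (pow_pos (show (0:ℝ) < v from hv) 2)
  · intro hy
    refine ⟨(Real.sqrt y)⁻¹, by simp [Real.sqrt_pos.mpr hy], ?_⟩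
    have hy' : (0:ℝ) < y := hy
    have : ((Real.sqrt y)⁻¹)^2 = y⁻¹ := by
      rw [inv_pow, Real.sq_sqrt hy'.le]
    show ((Real.sqrt y)⁻¹ ^ 2)⁻¹ = y
    rw [this, inv_inv]

private lemma phi_inj : Set.InjOn (fun v : ℝ => (v^2)⁻¹) (Ioi 0) := by
  intro u hu v hv h
  simp only at h
  have hu' : (0:ℝ) < u := hu
  have hv' : (0:ℝ) < v := hv
  have h2 : u^2 = v^2 := by
    have := inv_inj.mp h
    linarith
  nlinarith

private lemma phi_deriv {v : ℝ} (hv : v ∈ Ioi (0:ℝ)) :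
    HasDerivWithinAt (fun v : ℝ => (v^2)⁻¹) (-(2*v) / ((v^2)^2)) (Ioi 0) v := by
  have hv' : (0:ℝ) < v := hv
  have h := (hasDerivAt_pow 2 v).inv (by positivity)
  have heq : -((2:ℕ) * v ^ (2-1) : ℝ) / (v^2)^2 = -(2*v) / ((v^2)^2) := by norm_num
  rw [heq] at h
  exact h.hasDerivWithinAt

private lemma radial_hasDeriv (r : ℝ) :
    HasDerivAt (fun r : ℝ => -(2/π) * Real.exp (-(r^2/2)))
      ((2/π) * (r * Real.exp (-(r^2/2)))) r := by
  have h1 : HasDerivAt (fun r : ℝ => -(r^2/2)) (-r) r := by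
    have := ((hasDerivAt_pow 2 r).div_const 2).fun_neg
    refine this.congr_deriv ?_
    norm_num
  have h2 := (h1.exp).const_mul (-(2/π))
  refine h2.congr_deriv ?_
  ring

private lemma radial_tendsto :
    Tendsto (fun r : ℝ => -(2/π) * Real.exp (-(r^2/2))) atTop (𝓝 0) := by
  have h1 : Tendsto (fun r : ℝ => -(r^2/2)) atTop atBot := by
    apply tendsto_neg_atBot_iff.mpr
    exact (tendsto_pow_atTop (two_ne_zero)).atTop_div_const (by norm_num)
  have h2 : Tendsto (fun r : ℝ => Real.exp (-(r^2/2))) atTop (𝓝 0) :=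
    Real.tendsto_exp_atBot.comp h1
  have := h2.const_mul (-(2/π))
  simpa using this

private lemma radial_integral : ∫ r in Ioi (0:ℝ), (2/π) * (r * Real.exp (-(r^2/2))) = 2/π := by
  have h := integral_Ioi_of_hasDerivAt_of_nonneg
    (g := fun r : ℝ => -(2/π) * Real.exp (-(r^2/2)))
    (g' := fun r : ℝ => (2/π) * (r * Real.exp (-(r^2/2))))
    ((radial_hasDeriv 0).continuousAt.continuousWithinAt)
    (fun x _ => radial_hasDeriv x)
    (fun x hx => by have : (0:ℝ) < x := hx; positivity)
    radial_tendsto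
  rw [h]
  norm_num [Real.exp_zero]

private lemma radial_integrable :
    IntegrableOn (fun r : ℝ => (2/π) * (r * Real.exp (-(r^2/2)))) (Ioi 0) :=
  integrableOn_Ioi_deriv_of_nonneg
    ((radial_hasDeriv 0).continuousAt.continuousWithinAt)
    (fun x _ => radial_hasDeriv x)
    (fun x hx => by have : (0:ℝ) < x := hx; positivity)
    radial_tendsto

end Aux

/-- The stable distribution of index `1/2` (Lévy distribution with unit scale):
the measure on `ℝ` with density `t ↦ exp (-1/(2t)) / √(2π t³)` on `[0, ∞)`. -/
noncomputable def levyLaw : Measure ℝ :=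
  volume.withDensity (fun t => ENNReal.ofReal
    (if 0 ≤ t then Real.exp (-(1 / (2 * t))) / Real.sqrt (2 * π * t ^ 3) else 0))

section Aux2

open Set Filter Topology
open scoped ENNReal

/-- The Lévy density as an `ℝ≥0∞`-valued function. -/
noncomputable def myf : ℝ → ℝ≥0∞ := fun t => ENNReal.ofReal
    (if 0 ≤ t then Real.exp (-(1 / (2 * t))) / Real.sqrt (2 * π * t ^ 3) else 0)

lemma levyLaw_eq : levyLaw = volume.withDensity myf := rfl

lemma myf_meas : Measurable myf := by
  apply ENNReal.measurable_ofReal.comp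
  apply Measurable.ite measurableSet_Ici
  · have h1 : Measurable fun t : ℝ => -(1 / (2 * t)) := by
      have h2 : Measurable fun t : ℝ => (2 * t)⁻¹ := (measurable_id.const_mul 2).inv
      simpa [one_div] using h2.fun_neg
    exact (Real.measurable_exp.comp h1).div (by fun_prop)
  · exact measurable_const

lemma myf_zero {t : ℝ} (ht : t ≤ 0) : myf t = 0 := by
  rcases lt_or_eq_of_le ht with h | h
  · rw [myf, if_neg (not_le.mpr h)]
    exact ENNReal.ofReal_zero
  · subst h
    simp [myf]

/-- The half-Gaussian density as an `ℝ≥0∞`-valued function. -/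
noncomputable def gaussC : ℝ → ℝ≥0∞ := fun v =>
  ENNReal.ofReal (2 / Real.sqrt (2 * π) * Real.exp (-(v^2 / 2)))

lemma gaussC_ne_top (v : ℝ) : gaussC v ≠ ⊤ := ENNReal.ofReal_ne_top

lemma gaussC_meas : Measurable gaussC := by
  apply ENNReal.measurable_ofReal.comp
  fun_prop

lemma levy_density_subst {v : ℝ} (hv : 0 < v) :
    ENNReal.ofReal |(-(2*v)) / ((v^2)^2)| * myf ((v^2)⁻¹) = gaussC v := by
  rw [myf, gaussC, ← ENNReal.ofReal_mul (abs_nonneg _)]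
  congr 1
  rw [if_pos (by positivity)]
  have h1 : (1:ℝ) / (2 * (v^2)⁻¹) = v^2 / 2 := by field_simp
  have hsq : Real.sqrt (2 * π * ((v^2)⁻¹) ^ 3) = Real.sqrt (2 * π) * (v^3)⁻¹ := by
    have h6 : ((v^2)⁻¹) ^ 3 = ((v^3)⁻¹)^2 := by ring
    rw [h6, Real.sqrt_mul (by positivity), Real.sqrt_sq (by positivity)]
  have habs : |(-(2*v)) / ((v^2)^2)| = 2 * v / v^4 := by
    rw [abs_div, abs_neg, abs_of_pos (by positivity), abs_of_pos (by positivity)]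
    ring_nf
  rw [habs, h1, hsq]
  have hs : (0:ℝ) < Real.sqrt (2 * π) := Real.sqrt_pos.mpr (by positivity)
  field_simp

lemma polar_density {r θ : ℝ} :
    r * (2 / Real.sqrt (2 * π) * Real.exp (-((r * Real.cos θ)^2 / 2)) *
      (2 / Real.sqrt (2 * π) * Real.exp (-((r * Real.sin θ)^2 / 2))))
      = 2 / π * (r * Real.exp (-(r^2 / 2))) := by
  have hxy : (r * Real.cos θ)^2 + (r * Real.sin θ)^2 = r^2 := by
    have := Real.sin_sq_add_cos_sq θ
    nlinarith [this]
  have hexp : Real.exp (-((r * Real.cos θ)^2 / 2)) * Real.exp (-((r * Real.sin θ)^2 / 2))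
      = Real.exp (-(r^2 / 2)) := by
    rw [← Real.exp_add, ← hxy]
    ring_nf
  have hsq : Real.sqrt (2 * π) * Real.sqrt (2 * π) = 2 * π :=
    Real.mul_self_sqrt (by positivity)
  have hs : (0:ℝ) < Real.sqrt (2 * π) := Real.sqrt_pos.mpr (by positivity)
  calc r * (2 / Real.sqrt (2 * π) * Real.exp (-((r * Real.cos θ)^2 / 2)) *
      (2 / Real.sqrt (2 * π) * Real.exp (-((r * Real.sin θ)^2 / 2))))
      = (4 / (Real.sqrt (2 * π) * Real.sqrt (2 * π))) *
        (r * (Real.exp (-((r * Real.cos θ)^2 / 2)) * Real.exp (-((r * Real.sin θ)^2 / 2)))) := by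
        field_simp
        ring
    _ = 2 / π * (r * Real.exp (-(r^2 / 2))) := by
        rw [hexp, hsq]
        have hπ : (0:ℝ) < π := Real.pi_pos
        field_simp
        ring

end Aux2

section Main

open Set Filter Topology
open scoped ENNReal

/-- If `X` and `X'` are i.i.d. with the stable distribution of index
`1/2`, and `m, n` are positive integers, then `P(m² X < n² X') = (2/π) arctan (n/m)`. -/
theorem stmt_10 {Ω : Type*} [MeasureSpace Ω] [IsProbabilityMeasure (ℙ : Measure Ω)]
    (X X' : Ω → ℝ) (hX : Measurable X) (hX' : Measurable X')
    (hXlaw : Measure.map X ℙ = levyLaw) (hX'law : Measure.map X' ℙ = levyLaw)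
    (hindep : IndepFun X X' ℙ)
    (m n : ℕ) (hm : 0 < m) (hn : 0 < n) :
    (ℙ {ω | (m : ℝ) ^ 2 * X ω < (n : ℝ) ^ 2 * X' ω}).toReal
      = (2 / π) * Real.arctan ((n : ℝ) / (m : ℝ)) := by
  have ha : (0:ℝ) < (m:ℝ) := by exact_mod_cast hm
  have hb : (0:ℝ) < (n:ℝ) := by exact_mod_cast hn
  set a : ℝ := (m:ℝ)
  set b : ℝ := (n:ℝ)
  set A : ℝ := Real.arctan (b / a) with hA_def
  have hA0 : 0 ≤ A := by
    rw [hA_def, ← Real.arctan_zero]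
    exact Real.arctan_strictMono.monotone (by positivity)
  haveI hPlevy : IsProbabilityMeasure levyLaw := by
    rw [← hXlaw]; exact Measure.isProbabilityMeasure_map hX.aemeasurable
  set S : Set (ℝ × ℝ) := {p : ℝ × ℝ | a ^ 2 * p.1 < b ^ 2 * p.2} with hS_def
  have hS : MeasurableSet S := measurableSet_lt (by fun_prop) (by fun_prop)
  set W : ℝ × ℝ → ℝ≥0∞ := fun p =>
    if 0 < p.1 ∧ 0 < p.2 ∧ a * p.2 < b * p.1 then gaussC p.1 * gaussC p.2 else 0 with hW_def
  have hWmeas : Measurable W := by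
    apply Measurable.ite
    · exact ((measurableSet_lt measurable_const measurable_fst).inter
        ((measurableSet_lt measurable_const measurable_snd).inter
          (measurableSet_lt (measurable_snd.const_mul a) (measurable_fst.const_mul b))))
    · exact (gaussC_meas.comp measurable_fst).mul (gaussC_meas.comp measurable_snd)
    · exact measurable_const
  have hW0 : ∀ u v : ℝ, v ≤ 0 → W (u, v) = 0 := by
    intro u v hv
    simp only [hW_def]
    rw [if_neg]
    rintro ⟨-, h2, -⟩
    exact absurd h2 (not_lt.mpr hv)
  have hW0' : ∀ u v : ℝ, u ≤ 0 → W (u, v) = 0 := by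
    intro u v hu
    simp only [hW_def]
    rw [if_neg]
    rintro ⟨h1, -, -⟩
    exact absurd h1 (not_lt.mpr hu)
  -- Step 1: reduce to the product measure
  have h1 : ℙ {ω | a ^ 2 * X ω < b ^ 2 * X' ω} = (levyLaw.prod levyLaw) S := by
    have hpair : Measurable fun ω => (X ω, X' ω) := hX.prodMk hX'
    have hmap : Measure.map (fun ω => (X ω, X' ω)) ℙ = levyLaw.prod levyLaw := by
      have hmap0 := (indepFun_iff_map_prod_eq_prod_map_map hX.aemeasurable hX'.aemeasurable).mp
        hindep
      rwa [hXlaw, hX'law] at hmap0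
    rw [← hmap, Measure.map_apply hpair hS]
    rfl
  -- Step 2: unfold the densities, restrict to positive coordinates
  have h2 : (levyLaw.prod levyLaw) S
      = ∫⁻ x, myf x * (∫⁻ y in Ioi 0, if a ^ 2 * x < b ^ 2 * y then myf y else 0) ∂volume := by
    rw [Measure.prod_apply hS, levyLaw_eq,
      lintegral_withDensity_eq_lintegral_mul volume myf_meas
        (measurable_measure_prodMk_left hS)]
    refine lintegral_congr fun x => ?_
    simp only [Pi.mul_apply]
    congr 1
    have hTx : MeasurableSet (Prod.mk x ⁻¹' S) := hS.preimage measurable_prodMk_left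
    rw [← levyLaw_eq, levyLaw_eq, withDensity_apply _ hTx, ← lintegral_indicator hTx]
    rw [lintegral_Ioi_zero_ext (fun y => if a ^ 2 * x < b ^ 2 * y then myf y else 0)
      (fun y hy => by
        show (if a ^ 2 * x < b ^ 2 * y then myf y else 0) = 0
        by_cases hc : a ^ 2 * x < b ^ 2 * y
        · rw [if_pos hc, myf_zero hy]
        · rw [if_neg hc])]
    refine lintegral_congr fun y => ?_
    by_cases hy : a ^ 2 * x < b ^ 2 * y
    · rw [if_pos hy]
      exact Set.indicator_of_mem (show y ∈ Prod.mk x ⁻¹' S from hy) myf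
    · rw [if_neg hy]
      exact Set.indicator_of_notMem (show y ∉ Prod.mk x ⁻¹' S from hy) myf
  -- Step 3: substitute y = (v^2)⁻¹ in the inner integral
  have h3 : ∀ x : ℝ, (∫⁻ y in Ioi 0, if a ^ 2 * x < b ^ 2 * y then myf y else 0)
      = ∫⁻ v in Ioi 0, if a ^ 2 * x < b ^ 2 * (v^2)⁻¹ then gaussC v else 0 := by
    intro x
    conv_lhs => rw [← phi_image]
    rw [lintegral_image_eq_lintegral_abs_deriv_mul'' measurableSet_Ioi
      (fun v hv => phi_deriv hv) phi_inj]
    refine setLIntegral_congr_fun measurableSet_Ioi (fun v hv => ?_)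
    have hv' : (0:ℝ) < v := hv
    show ENNReal.ofReal |(-(2*v)) / ((v^2)^2)| *
        (if a ^ 2 * x < b ^ 2 * (v^2)⁻¹ then myf ((v^2)⁻¹) else 0)
      = if a ^ 2 * x < b ^ 2 * (v^2)⁻¹ then gaussC v else 0
    by_cases hc : a ^ 2 * x < b ^ 2 * (v^2)⁻¹
    · rw [if_pos hc, if_pos hc, levy_density_subst hv']
    · rw [if_neg hc, if_neg hc, mul_zero]
  -- Step 4: substitute x = (u^2)⁻¹ in the outer integral
  have h4 : (∫⁻ x, myf x * (∫⁻ v in Ioi 0,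
        if a ^ 2 * x < b ^ 2 * (v^2)⁻¹ then gaussC v else 0) ∂volume)
      = ∫⁻ u in Ioi 0, ∫⁻ v in Ioi 0, W (u, v) := by
    rw [← lintegral_Ioi_zero_ext _ (fun x hx => by rw [myf_zero hx, zero_mul])]
    conv_lhs => rw [← phi_image]
    rw [lintegral_image_eq_lintegral_abs_deriv_mul'' measurableSet_Ioi
      (fun u hu => phi_deriv hu) phi_inj]
    refine setLIntegral_congr_fun measurableSet_Ioi (fun u hu => ?_)
    have hu' : (0:ℝ) < u := hu
    show ENNReal.ofReal |(-(2*u)) / ((u^2)^2)| * (myf ((u^2)⁻¹) *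
        ∫⁻ v in (fun v : ℝ => (v^2)⁻¹) '' Ioi 0,
          if a ^ 2 * (u^2)⁻¹ < b ^ 2 * (v^2)⁻¹ then gaussC v else 0)
      = ∫⁻ v in Ioi 0, W (u, v)
    rw [phi_image, ← mul_assoc, levy_density_subst hu',
      ← lintegral_const_mul' _ _ (gaussC_ne_top u)]
    refine setLIntegral_congr_fun measurableSet_Ioi (fun v hv => ?_)
    have hv' : (0:ℝ) < v := hv
    show gaussC u * (if a ^ 2 * (u^2)⁻¹ < b ^ 2 * (v^2)⁻¹ then gaussC v else 0) = W (u, v)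
    simp only [hW_def]
    by_cases hc : a * v < b * u
    · rw [if_pos ((cond_iff' ha hb hu' hv').mpr hc), if_pos ⟨hu', hv', hc⟩]
    · rw [if_neg (fun h => hc ((cond_iff' ha hb hu' hv').mp h)), mul_zero,
        if_neg (fun h => hc (h.2.2))]
  -- Step 5: extend to the whole plane and apply polar coordinates
  have h5 : (∫⁻ u in Ioi 0, ∫⁻ v in Ioi 0, W (u, v)) = ∫⁻ p : ℝ × ℝ, W p := by
    have e1 : ∀ u : ℝ, (∫⁻ v in Ioi 0, W (u, v)) = ∫⁻ v, W (u, v) :=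
      fun u => lintegral_Ioi_zero_ext _ (fun v hv => hW0 u v hv)
    calc (∫⁻ u in Ioi 0, ∫⁻ v in Ioi 0, W (u, v))
        = ∫⁻ u in Ioi 0, ∫⁻ v, W (u, v) := by
          exact setLIntegral_congr_fun measurableSet_Ioi
            (fun u _ => e1 u)
      _ = ∫⁻ u, ∫⁻ v, W (u, v) := by
          refine lintegral_Ioi_zero_ext _ fun u hu => ?_
          have : (fun v => W (u, v)) = fun _ => 0 := funext fun v => hW0' u v hu
          rw [this, lintegral_const, zero_mul]
      _ = ∫⁻ p : ℝ × ℝ, W p ∂(volume.prod volume) :=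
          (lintegral_prod W hWmeas.aemeasurable).symm
      _ = ∫⁻ p : ℝ × ℝ, W p := by rw [← Measure.volume_eq_prod]
  have h6 : (∫⁻ p : ℝ × ℝ, W p)
      = ∫⁻ q in polarCoord.target,
          ENNReal.ofReal (2 / π * (q.1 * Real.exp (-(q.1^2 / 2))))
            * (Ioo (0:ℝ) A).indicator (1 : ℝ → ℝ≥0∞) q.2 := by
    rw [← my_lintegral_comp_polarCoord_symm W]
    refine setLIntegral_congr_fun polarCoord.open_target.measurableSet
      (fun q hq => ?_)
    rw [polarCoord_target] at hq
    have hr : (0:ℝ) < q.1 := hq.1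
    have hθ : q.2 ∈ Ioo (-π) π := hq.2
    rw [polarCoord_symm_apply]
    simp only [hW_def]
    by_cases hmem : q.2 ∈ Ioo 0 A
    · rw [if_pos ((angle_iff' ha hb hr hθ).mpr hmem), Set.indicator_of_mem hmem, Pi.one_apply, mul_one]
      rw [gaussC, gaussC, ← ENNReal.ofReal_mul (by positivity),
        ← ENNReal.ofReal_mul hr.le]
      congr 1
      exact polar_density
    · rw [if_neg (fun h => hmem ((angle_iff' ha hb hr hθ).mp h)),
        Set.indicator_of_notMem hmem, mul_zero, mul_zero]
  have h7 : (∫⁻ q in polarCoord.target,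
        ENNReal.ofReal (2 / π * (q.1 * Real.exp (-(q.1^2 / 2))))
          * (Ioo (0:ℝ) A).indicator (1 : ℝ → ℝ≥0∞) q.2)
      = ENNReal.ofReal (2 / π) * ENNReal.ofReal A := by
    rw [polarCoord_target, Measure.volume_eq_prod, ← Measure.prod_restrict,
      lintegral_prod_mul
        (f := fun r => ENNReal.ofReal (2 / π * (r * Real.exp (-(r^2 / 2)))))
        (g := fun θ => (Ioo (0:ℝ) A).indicator (1 : ℝ → ℝ≥0∞) θ)
        (by apply (ENNReal.measurable_ofReal.comp (by fun_prop)).aemeasurable)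
        ((measurable_one.indicator measurableSet_Ioo).aemeasurable)]
    congr 1
    · rw [← ofReal_integral_eq_lintegral_ofReal radial_integrable
        ((ae_restrict_iff' measurableSet_Ioi).mpr (Filter.Eventually.of_forall fun x hx => by
          have : (0:ℝ) < x := hx; positivity)), radial_integral]
    · rw [lintegral_indicator_one measurableSet_Ioo, Measure.restrict_apply measurableSet_Ioo,
        Set.inter_eq_left.mpr, Real.volume_Ioo, sub_zero]
      intro x hx
      have hA2 : A < π / 2 := Real.arctan_lt_pi_div_two _
      exact ⟨by linarith [Real.pi_pos, hx.1], by linarith [Real.pi_pos, hx.2, hA2]⟩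
  -- Conclusion
  have key : ℙ {ω | a ^ 2 * X ω < b ^ 2 * X' ω} = ENNReal.ofReal (2 / π * A) := by
    rw [h1, h2]
    rw [lintegral_congr fun x => by rw [h3 x]]
    rw [h4, h5, h6, h7, ← ENNReal.ofReal_mul (by positivity)]
  rw [key, ENNReal.toReal_ofReal (by positivity)]

end Main
end

section
/- Let T be a finite tree on vertex set V with at least one vertex. For adjacent vertices u and v, let |T[u,∖v]| denote the number of vertices of T[u,∖v]. Then Σ_{u ∈ V} [ 1 − (2/π) Σ_{v adjacent to u} arctan( |T[v,∖u]| / |T[u,∖v]| ) ] = 1. (This expresses that the election probabilities q_u = 1 − (2/π) Σ_{v∼u} arctan(|T[v,∖u]|/|T[u,∖v]|) of the stable-distribution election algorithm sum to 1.) -/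
open scoped Classical

open Real

/-- `branch G u v` is the vertex set of `T[u,∖v]`: the set of vertices `w` reachable
from `u` after deleting the edge `{u, v}`, i.e. the vertices whose unique path to `v`
passes through `u`. -/
noncomputable def branch {V : Type*} [Fintype V] (G : SimpleGraph V) (u v : V) : Finset V :=
  Finset.univ.filter (fun w => (G.deleteEdges {s(u, v)}).Reachable u w)

lemma branch_card_pos {V : Type*} [Fintype V] (G : SimpleGraph V) (u v : V) :
    0 < (branch G u v).card := by
  apply Finset.card_pos.mpr
  refine ⟨u, ?_⟩
  simp only [branch, Finset.mem_filter, Finset.mem_univ, true_and]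
  exact SimpleGraph.Reachable.refl u

/-- For a finite tree `T` with at least one vertex,
`∑_{u ∈ V} [1 - (2/π) ∑_{v ∼ u} arctan (|T[v,∖u]| / |T[u,∖v]|)] = 1`:
the election probabilities of the stable-distribution election algorithm sum to `1`. -/
theorem stmt_11 {V : Type*} [Fintype V] [Nonempty V]
    (G : SimpleGraph V) (hT : G.IsTree) :
    ∑ u : V, (1 - (2 / π) * ∑ v ∈ G.neighborFinset u,
        Real.arctan (((branch G v u).card : ℝ) / ((branch G u v).card : ℝ))) = 1 := by
  set f : V → V → ℝ := fun u v =>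
    Real.arctan (((branch G v u).card : ℝ) / ((branch G u v).card : ℝ)) with hf
  have hcard : ∀ u v : V, (0:ℝ) < ((branch G u v).card : ℝ) := by
    intro u v; exact_mod_cast branch_card_pos G u v
  have hpair : ∀ u v : V, f u v + f v u = π / 2 := by
    intro u v
    have hx : (0:ℝ) < ((branch G u v).card : ℝ) / ((branch G v u).card : ℝ) :=
      div_pos (hcard u v) (hcard v u)
    have hinv : (((branch G u v).card : ℝ) / ((branch G v u).card : ℝ))⁻¹
        = ((branch G v u).card : ℝ) / ((branch G u v).card : ℝ) := by
      rw [inv_div]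
    have := Real.arctan_inv_of_pos hx
    rw [hinv] at this
    simp only [hf, this]
    ring
  have hS : ∀ u : V, ∑ v ∈ G.neighborFinset u, f u v
      = ∑ v : V, if G.Adj u v then f u v else 0 := by
    intro u
    rw [SimpleGraph.neighborFinset_eq_filter, Finset.sum_filter]
  set S : ℝ := ∑ u : V, ∑ v ∈ G.neighborFinset u, f u v with hSdef
  have hswap : S = ∑ u : V, ∑ v : V, if G.Adj u v then f v u else 0 := by
    rw [hSdef]
    simp_rw [hS]
    rw [Finset.sum_comm]
    apply Finset.sum_congr rfl; intro u _
    apply Finset.sum_congr rfl; intro v _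
    simp [G.adj_comm]
  have hdeg : (∑ u : V, (G.degree u : ℝ)) = 2 * (Fintype.card V - 1) := by
    have h1 : ∑ u : V, G.degree u = 2 * G.edgeFinset.card :=
      SimpleGraph.sum_degrees_eq_twice_card_edges G
    have h2 : G.edgeFinset.card + 1 = Fintype.card V := hT.card_edgeFinset
    have : ((∑ u : V, G.degree u : ℕ) : ℝ) = ((2 * G.edgeFinset.card : ℕ) : ℝ) := by
      exact_mod_cast congrArg (fun n : ℕ => (n : ℝ)) h1
    push_cast at this
    have h2' : (G.edgeFinset.card : ℝ) + 1 = (Fintype.card V : ℝ) := by exact_mod_cast h2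
    linarith
  have h2S : S + S = π * (Fintype.card V - 1) := by
    nth_rewrite 1 [hSdef]
    rw [hswap]
    simp_rw [hS]
    rw [← Finset.sum_add_distrib]
    have : ∀ u : V, ((∑ v : V, if G.Adj u v then f u v else 0)
        + ∑ v : V, if G.Adj u v then f v u else 0)
        = (π / 2) * (G.degree u : ℝ) := by
      intro u
      rw [← Finset.sum_add_distrib]
      have : ∀ v : V, ((if G.Adj u v then f u v else 0) + (if G.Adj u v then f v u else 0))
          = if G.Adj u v then (π/2) else 0 := by
        intro v
        by_cases h : G.Adj u v <;> simp [h, hpair u v]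
      simp_rw [this]
      rw [Finset.sum_ite, Finset.sum_const, Finset.sum_const]
      simp [SimpleGraph.degree, SimpleGraph.neighborFinset_eq_filter, mul_comm]
    simp_rw [this]
    rw [← Finset.mul_sum, hdeg]
    ring
  have hSval : S = π * (Fintype.card V - 1) / 2 := by linarith
  have hπ : (π : ℝ) ≠ 0 := Real.pi_ne_zero
  rw [Finset.sum_sub_distrib, Finset.sum_const, Finset.card_univ, ← Finset.mul_sum, ← hSdef, hSval]
  field_simp
  ring
end
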